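/- Let p, p' : V → Option V be two parent functions on a finite set V such that for every v, p'(v) = p(v) or p'(v) = none (each node either keeps its parent or becomes a root). If every vertex is valid under p, then every vertex is valid under p'. -/

import Mathlib

variable {V : Type*}

/-- Iterating a parent function `p : V → Option V`: `piter p n v` is the `n`-th parent
of `v` (or `none` if the chain has ended). -/
def piter (p : V → Option V) (n : ℕ) (v : V) : Option V := (fun o => o.bind p)^[n] (some v)

/-- A vertex is valid if some finite iteration of the parent function from it reaches a
vertex with no parent (a root). -/
def pvalid (p : V → Option V) (v : V) : Prop := ∃ n u, piter p n v = some u ∧ p u = none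

/-- Weak connectivity relation of the functional digraph with edges `v → p v`. -/
def pconn (p : V → Option V) : V → V → Prop :=
  Relation.ReflTransGen (fun a b => p a = some b ∨ p b = some a)

theorem pconn_equiv (p : V → Option V) : Equivalence (pconn p) :=
  ⟨fun _ => .refl,
   fun h => (@Relation.ReflTransGen.stdSymm _ _ ⟨fun _ _ hab => Or.symm hab⟩).symm _ _ h,
   fun h₁ h₂ => h₁.trans h₂⟩

/-- The setoid whose classes are the weakly connected components of the functional
digraph of `p`. -/
def pSetoid (p : V → Option V) : Setoid V := ⟨pconn p, pconn_equiv p⟩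

theorem piter_succ (p : V → Option V) (n : ℕ) (v : V) :
    piter p (n + 1) v = (p v).bind (piter p n) := by
  rw [piter, Function.iterate_succ_apply, Option.bind_some]
  cases p v with
  | none => exact Function.iterate_fixed (f := fun o : Option V => o.bind p) (x := none) rfl n
  | some w => rfl

theorem pvalid_of_eq_none {p : V → Option V} {v : V} (hv : p v = none) : pvalid p v :=
  ⟨0, v, rfl, hv⟩

theorem pvalid_of_eq_some {p : V → Option V} {v w : V} (hv : p v = some w)
    (hw : pvalid p w) : pvalid p v := by
  obtain ⟨n, u, hn, hu⟩ := hw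
  exact ⟨n + 1, u, by rw [piter_succ, hv, Option.bind_some, hn], hu⟩

theorem pvalid_of_keep_or_orphan {p p' : V → Option V}
    (hstep : ∀ v, p' v = p v ∨ p' v = none) {v : V} (hv : pvalid p v) : pvalid p' v := by
  obtain ⟨n, u, hn, hu⟩ := hv
  induction n generalizing v with
  | zero =>
    obtain rfl : v = u := Option.some_injective _ hn
    exact pvalid_of_eq_none ((hstep v).elim (·.trans hu) id)
  | succ n ih =>
    rw [piter_succ] at hn
    cases hpv : p v with
    | none => simp [hpv] at hn
    | some w =>
      rw [hpv, Option.bind_some] at hn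
      rcases hstep v with hkeep | horphan
      · exact pvalid_of_eq_some (hkeep.trans hpv) (ih hn)
      · exact pvalid_of_eq_none horphan

theorem keep_or_orphan_preserves_valid_general (p p' : V → Option V)
    (hstep : ∀ v, p' v = p v ∨ p' v = none)
    (hvalid : ∀ v, pvalid p v) :
    ∀ v, pvalid p' v :=
  fun v => pvalid_of_keep_or_orphan hstep (hvalid v)

/-- If each node either keeps its parent or becomes a root, validity of all vertices is
preserved. -/
theorem keep_or_orphan_preserves_valid [Fintype V] (p p' : V → Option V)
    (hstep : ∀ v, p' v = p v ∨ p' v = none)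
    (hvalid : ∀ v, pvalid p v) :
    ∀ v, pvalid p' v :=
  keep_or_orphan_preserves_valid_general p p' hstep hvalid
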